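/- (Hyperbolic Hardy inequality, Euclidean conformal form.) Let n ≥ 3 be an integer and let B₁ ⊂ ℝⁿ be the open unit ball. With V₂ as defined below, for every u ∈ C_c^∞(B₁) one has ((n−2)²/4) ∫_{B₁} V₂(|x|) u(x)² (2/(1−|x|²))ⁿ dx ≤ ∫_{B₁} (2/(1−|x|²))^{n−2} |∇u(x)|² dx. -/

import Mathlib

open Real Filter Set MeasureTheory Metric
open scoped ENNReal

/-- `f n r = (1 - r²)^(n-2) / r^(n-1)`. -/
noncomputable def f (n : ℕ) (r : ℝ) : ℝ := (1 - r ^ 2) ^ (n - 2) / r ^ (n - 1)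

/-- `G n r = ∫_r^1 f n t dt`. -/
noncomputable def G (n : ℕ) (r : ℝ) : ℝ := ∫ t in r..(1 : ℝ), f n t

/-- `V n p r = f(r)²(1-r²)² / (4(n-2)² G(r)^((p+2)/2))`. -/
noncomputable def V (n : ℕ) (p r : ℝ) : ℝ :=
  f n r ^ 2 * (1 - r ^ 2) ^ 2 / (4 * ((n : ℝ) - 2) ^ 2 * G n r ^ ((p + 2) / 2))

lemma f_pos {n : ℕ} {r : ℝ} (h0 : 0 < r) (h1 : r < 1) : 0 < f n r := by
  have h2 : (0:ℝ) < 1 - r ^ 2 := by nlinarith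
  exact div_pos (pow_pos h2 _) (pow_pos h0 _)

lemma f_contAt {n : ℕ} {r : ℝ} (h0 : r ≠ 0) : ContinuousAt (f n) r := by
  apply ContinuousAt.div
  · fun_prop
  · fun_prop
  · exact pow_ne_zero _ h0

lemma f_contOn {n : ℕ} {s : Set ℝ} (hs : ∀ r ∈ s, r ≠ 0) : ContinuousOn (f n) s :=
  fun r hr => (f_contAt (hs r hr)).continuousWithinAt

lemma f_intble {n : ℕ} {a b : ℝ} (ha : 0 < a) (hb : 0 < b) :
    IntervalIntegrable (f n) volume a b := by
  apply ContinuousOn.intervalIntegrable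
  apply f_contOn
  intro r hr
  rcases Set.mem_uIcc.1 hr with h | h <;> nlinarith [h.1, h.2]

lemma hasDerivAt_G {n : ℕ} {r : ℝ} (h0 : 0 < r) : HasDerivAt (G n) (-(f n r)) r := by
  apply intervalIntegral.integral_hasDerivAt_left (f_intble h0 one_pos)
  · exact ⟨Ioi 0, Ioi_mem_nhds h0, (f_contOn (fun x hx => ne_of_gt hx)).aestronglyMeasurable measurableSet_Ioi⟩
  · exact f_contAt h0.ne'

lemma G_contOn {n : ℕ} : ContinuousOn (G n) (Ioi 0) :=
  fun r hr => (hasDerivAt_G hr).continuousAt.continuousWithinAt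

lemma G_pos {n : ℕ} {r : ℝ} (h0 : 0 < r) (h1 : r < 1) : 0 < G n r := by
  apply intervalIntegral.intervalIntegral_pos_of_pos_on (f_intble h0 one_pos)
  · exact fun x hx => f_pos (lt_trans h0 hx.1) hx.2
  · exact h1

lemma hardy1d (n : ℕ) {ρ δ : ℝ} (hδ : 0 < δ) (hδρ : δ < ρ) (hρ : ρ < 1)
    (φ D : ℝ → ℝ) (hD : ∀ r ∈ Set.Icc δ ρ, HasDerivAt φ (D r) r)
    (hDc : ContinuousOn D (Icc δ ρ)) (hφρ : φ ρ = 0) :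
    ∫ r in δ..ρ, f n r * φ r ^ 2 / (G n r) ^ 2
      ≤ 4 * ∫ r in δ..ρ, D r ^ 2 / f n r := by
  have hmem : ∀ r ∈ Icc δ ρ, 0 < r ∧ r < 1 := fun r hr =>
    ⟨lt_of_lt_of_le hδ hr.1, lt_of_le_of_lt hr.2 hρ⟩
  have hφc : ContinuousOn φ (Icc δ ρ) := fun r hr => (hD r hr).continuousAt.continuousWithinAt
  have hfc : ContinuousOn (f n) (Icc δ ρ) := fun r hr =>
    (f_contAt (hmem r hr).1.ne').continuousWithinAt
  have hGc : ContinuousOn (G n) (Icc δ ρ) := fun r hr =>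
    (hasDerivAt_G (hmem r hr).1).continuousAt.continuousWithinAt
  have hGne : ∀ r ∈ Icc δ ρ, G n r ≠ 0 := fun r hr =>
    (G_pos (hmem r hr).1 (hmem r hr).2).ne'
  have hfne : ∀ r ∈ Icc δ ρ, f n r ≠ 0 := fun r hr =>
    (f_pos (hmem r hr).1 (hmem r hr).2).ne'
  have huIcc : uIcc δ ρ = Icc δ ρ := uIcc_of_le hδρ.le
  -- continuity of the three integrands
  have hc1 : ContinuousOn (fun r => f n r * φ r ^ 2 / (G n r) ^ 2) (Icc δ ρ) :=
    ((hfc.mul (hφc.pow 2)).div (hGc.pow 2) (fun r hr => pow_ne_zero _ (hGne r hr)))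
  have hc2 : ContinuousOn (fun r => 2 * φ r * D r / G n r) (Icc δ ρ) :=
    (((continuousOn_const.mul hφc).mul hDc).div hGc hGne)
  have hc3 : ContinuousOn (fun r => D r ^ 2 / f n r) (Icc δ ρ) :=
    ((hDc.pow 2).div hfc hfne)
  have hi1 : IntervalIntegrable (fun r => f n r * φ r ^ 2 / (G n r) ^ 2) volume δ ρ :=
    (hc1.mono (by rw [huIcc])).intervalIntegrable
  have hi2 : IntervalIntegrable (fun r => 2 * φ r * D r / G n r) volume δ ρ :=
    (hc2.mono (by rw [huIcc])).intervalIntegrable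
  have hi3 : IntervalIntegrable (fun r => D r ^ 2 / f n r) volume δ ρ :=
    (hc3.mono (by rw [huIcc])).intervalIntegrable
  -- FTC
  have hΦ : ∀ r ∈ uIcc δ ρ, HasDerivAt (fun s => φ s ^ 2 / G n s)
      (2 * φ r * D r / G n r + f n r * φ r ^ 2 / (G n r) ^ 2) r := by
    rw [huIcc]
    intro r hr
    have h1 : HasDerivAt (fun s => φ s ^ 2) (2 * φ r * D r) r := by
      have := (hD r hr).pow 2
      have e : (fun s => φ s ^ 2) = φ ^ 2 := rfl
      rw [e]
      simpa [mul_comm, mul_assoc, mul_left_comm] using this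
    have h2 : HasDerivAt (fun s => φ s ^ 2 / G n s) _ r := (h1.div (hasDerivAt_G (hmem r hr).1) (hGne r hr))
    have hG : G n r ≠ 0 := hGne r hr
    convert h2 using 1
    field_simp
    ring
  have hftc := intervalIntegral.integral_eq_sub_of_hasDerivAt hΦ (by
    apply ContinuousOn.intervalIntegrable
    rw [huIcc]
    exact hc2.add hc1)
  rw [hφρ] at hftc
  have hδmem : δ ∈ Icc δ ρ := ⟨le_refl _, hδρ.le⟩
  have hsum_le : (∫ r in δ..ρ, (2 * φ r * D r / G n r + f n r * φ r ^ 2 / (G n r) ^ 2)) ≤ 0 := by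
    rw [hftc]
    have : 0 ≤ φ δ ^ 2 / G n δ :=
      div_nonneg (sq_nonneg _) (G_pos (hmem δ hδmem).1 (hmem δ hδmem).2).le
    simp only [ne_eq, OfNat.ofNat_ne_zero, not_false_eq_true, zero_pow, zero_div]
    linarith
  rw [intervalIntegral.integral_add hi2 hi1] at hsum_le
  -- pointwise bound on the cross term
  have hpt : ∀ r ∈ Icc δ ρ, -(2 * φ r * D r / G n r)
      ≤ f n r * φ r ^ 2 / (G n r) ^ 2 / 2 + 2 * (D r ^ 2 / f n r) := by
    intro r hr
    have hf : 0 < f n r := f_pos (hmem r hr).1 (hmem r hr).2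
    have hG : 0 < G n r := G_pos (hmem r hr).1 (hmem r hr).2
    have key : f n r * φ r ^ 2 / (G n r) ^ 2 / 2 + 2 * (D r ^ 2 / f n r) + 2 * φ r * D r / G n r
        = (f n r * φ r / G n r + 2 * D r) ^ 2 / (2 * f n r) := by
      field_simp
      ring
    have h0 : 0 ≤ (f n r * φ r / G n r + 2 * D r) ^ 2 / (2 * f n r) := by positivity
    linarith [key ▸ h0]
  have hmono : (∫ r in δ..ρ, -(2 * φ r * D r / G n r))
      ≤ ∫ r in δ..ρ, (f n r * φ r ^ 2 / (G n r) ^ 2 / 2 + 2 * (D r ^ 2 / f n r)) := by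
    apply intervalIntegral.integral_mono_on hδρ.le hi2.neg
    · exact ((hi1.div_const 2).add (hi3.const_mul 2))
    · exact hpt
  rw [intervalIntegral.integral_neg, intervalIntegral.integral_add (hi1.div_const 2) (hi3.const_mul 2),
    intervalIntegral.integral_div, intervalIntegral.integral_const_mul] at hmono
  linarith

lemma Dsq_integrableOn (n : ℕ) {ρ : ℝ} (hρ0 : 0 < ρ) (hρ1 : ρ < 1) (c4 : ℝ)
    (D : ℝ → ℝ) (hDc : Continuous D) :
    IntegrableOn (fun r => c4 * (D r ^ 2 / f n r)) (Ioc (0:ℝ) ρ) volume := by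
  have hcont : ContinuousOn (fun r => c4 * (D r ^ 2 * (r ^ (n-1) / (1 - r ^ 2) ^ (n-2))))
      (Icc 0 ρ) := by
    apply ContinuousOn.mul continuousOn_const
    apply ContinuousOn.mul (hDc.continuousOn.pow 2)
    apply ContinuousOn.div (continuousOn_pow _) (ContinuousOn.pow (by fun_prop) _)
    intro r hr
    have h1 : r < 1 := lt_of_le_of_lt hr.2 hρ1
    have h2 : (0:ℝ) < 1 - r ^ 2 := by nlinarith [hr.1]
    exact pow_ne_zero _ h2.ne'
  have h1 : IntegrableOn (fun r => c4 * (D r ^ 2 * (r ^ (n-1) / (1 - r ^ 2) ^ (n-2))))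
      (Ioc 0 ρ) :=
    (hcont.integrableOn_compact isCompact_Icc).mono_set Ioc_subset_Icc_self
  apply h1.congr_fun _ measurableSet_Ioc
  intro r hr
  have hr1 : r < 1 := lt_of_le_of_lt hr.2 hρ1
  have h2 : (0:ℝ) < 1 - r ^ 2 := by nlinarith [hr.1]
  show c4 * (D r ^ 2 * (r ^ (n-1) / (1 - r ^ 2) ^ (n-2))) = c4 * (D r ^ 2 / f n r)
  have hfr : f n r = (1 - r ^ 2) ^ (n-2) / r ^ (n-1) := rfl
  rw [hfr, div_div_eq_mul_div, mul_div_assoc]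

lemma hardy1d_lintegral (n : ℕ) {ρ : ℝ} (hρ0 : 0 < ρ) (hρ1 : ρ < 1) {c : ℝ} (hc : 0 ≤ c)
    (φ D : ℝ → ℝ) (hD : ∀ r : ℝ, HasDerivAt φ (D r) r) (hDc : Continuous D)
    (hφ0 : ∀ r, ρ ≤ r → φ r = 0) :
    ∫⁻ r in Ioi (0:ℝ), ENNReal.ofReal (c * (f n r * φ r ^ 2 / G n r ^ 2))
      ≤ ENNReal.ofReal (∫ r in Ioc (0:ℝ) ρ, 4 * c * (D r ^ 2 / f n r)) := by
  set ψ : ℝ → ℝ := fun r => c * (f n r * φ r ^ 2 / G n r ^ 2) with hψdef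
  set ψ' : ℝ → ℝ≥0∞ := fun r => ENNReal.ofReal (ψ r) with hψ'def
  have hφc : Continuous φ := by
    rw [continuous_iff_continuousAt]; exact fun x => (hD x).continuousAt
  -- integrability of the RHS integrand on `Ioc 0 ρ`
  have hBint : IntegrableOn (fun r => 4 * c * (D r ^ 2 / f n r)) (Ioc 0 ρ) :=
    Dsq_integrableOn n hρ0 hρ1 (4*c) D hDc
  have hBnonneg : ∀ r ∈ Ioc (0:ℝ) ρ, 0 ≤ 4 * c * (D r ^ 2 / f n r) := by
    intro r hr
    have := f_pos (n := n) hr.1 (lt_of_le_of_lt hr.2 hρ1)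
    positivity
  -- split `Ioi 0` into `Ioc 0 ρ` and `Ioi ρ`
  rw [← Ioc_union_Ioi_eq_Ioi hρ0.le, lintegral_union measurableSet_Ioi Ioc_disjoint_Ioi_same]
  have hzero : ∫⁻ r in Ioi ρ, ψ' r = 0 := by
    rw [setLIntegral_congr_fun measurableSet_Ioi
      (fun r (hr : r ∈ Ioi ρ) => by
        show ψ' r = 0
        simp [hψ'def, hψdef, hφ0 r (le_of_lt hr)])]
    simp
  rw [hzero, add_zero]
  -- monotone family of sets
  set S : ℕ → Set ℝ := fun k => Ioc (ρ/(k+2)) ρ with hSdef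
  have hSpos : ∀ k : ℕ, 0 < ρ/((k:ℝ)+2) := fun k => by positivity
  have hSlt : ∀ k : ℕ, ρ/((k:ℝ)+2) < ρ := fun k => by
    rw [div_lt_iff₀ (by positivity)]; nlinarith
  have hSsub : ∀ k, S k ⊆ Ioc (0:ℝ) ρ := fun k =>
    Ioc_subset_Ioc_left (hSpos k).le
  have hSmono : Monotone S := by
    intro k l hkl
    apply Ioc_subset_Ioc_left
    apply div_le_div_of_nonneg_left hρ0.le (by positivity)
    have : (k:ℝ) ≤ l := Nat.cast_le.2 hkl
    linarith
  have hSunion : ⋃ k, S k = Ioc (0:ℝ) ρ := by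
    ext r
    simp only [mem_iUnion, mem_Ioc, hSdef]
    constructor
    · rintro ⟨k, hk1, hk2⟩; exact ⟨lt_trans (hSpos k) hk1, hk2⟩
    · rintro ⟨hr0, hrρ⟩
      obtain ⟨k, hk⟩ := exists_nat_gt (ρ/r)
      refine ⟨k, ?_, hrρ⟩
      rw [div_lt_iff₀ (by positivity)]
      rw [div_lt_iff₀ hr0] at hk
      nlinarith
  -- a.e.-measurability of ψ' on each S k
  have hψmeas : ∀ k, AEMeasurable ψ' (volume.restrict (S k)) := by
    intro k
    apply ENNReal.measurable_ofReal.comp_aemeasurable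
    apply ContinuousOn.aemeasurable _ measurableSet_Ioc
    intro r hr
    have h0 : 0 < r := lt_trans (hSpos k) hr.1
    have h1 : r < 1 := lt_of_le_of_lt hr.2 hρ1
    have hG := (G_pos (n := n) h0 h1).ne'
    exact (ContinuousAt.mul continuousAt_const (((f_contAt h0.ne').mul
      ((hφc.pow 2).continuousAt)).div (((hasDerivAt_G h0).continuousAt).pow 2)
      (pow_ne_zero _ hG))).continuousWithinAt
  -- the ψ' integral over each S k is bounded by the RHS
  have hSbound : ∀ k, ∫⁻ r in S k, ψ' r
      ≤ ENNReal.ofReal (∫ r in Ioc (0:ℝ) ρ, 4 * c * (D r ^ 2 / f n r)) := by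
    intro k
    set δ := ρ/((k:ℝ)+2) with hδdef
    have hδ0 := hSpos k
    have hδρ := hSlt k
    have hψcont : ContinuousOn ψ (Icc δ ρ) := by
      intro r hr
      have h0 : 0 < r := lt_of_lt_of_le hδ0 hr.1
      have h1 : r < 1 := lt_of_le_of_lt hr.2 hρ1
      have hG := (G_pos (n := n) h0 h1).ne'
      exact (ContinuousAt.mul continuousAt_const (((f_contAt h0.ne').mul
        ((hφc.pow 2).continuousAt)).div (((hasDerivAt_G h0).continuousAt).pow 2)
        (pow_ne_zero _ hG))).continuousWithinAt
    have hψint : IntegrableOn ψ (Ioc δ ρ) :=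
      (hψcont.integrableOn_compact isCompact_Icc).mono_set Ioc_subset_Icc_self
    have hψnn : 0 ≤ᵐ[volume.restrict (S k)] ψ := by
      apply ae_restrict_of_forall_mem measurableSet_Ioc
      intro r hr
      have h0 : 0 < r := lt_trans hδ0 hr.1
      have h1 : r < 1 := lt_of_le_of_lt hr.2 hρ1
      have hf := f_pos (n := n) h0 h1
      have hG := G_pos (n := n) h0 h1
      positivity
    rw [show (∫⁻ r in S k, ψ' r) = ∫⁻ r in S k, ENNReal.ofReal (ψ r) from rfl,
      ← ofReal_integral_eq_lintegral_ofReal hψint hψnn]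
    apply ENNReal.ofReal_le_ofReal
    -- real inequality
    have h1 : ∫ r in Ioc δ ρ, ψ r = c * ∫ r in δ..ρ, f n r * φ r ^ 2 / G n r ^ 2 := by
      rw [intervalIntegral.integral_of_le hδρ.le, ← integral_const_mul]
    have h2 : ∫ r in δ..ρ, f n r * φ r ^ 2 / G n r ^ 2 ≤ 4 * ∫ r in δ..ρ, D r ^ 2 / f n r := by
      apply hardy1d n hδ0 hδρ hρ1 φ D (fun r _ => hD r) (hDc.continuousOn)
        (hφ0 ρ le_rfl)
    have h3 : c * (4 * ∫ r in δ..ρ, D r ^ 2 / f n r) = ∫ r in Ioc δ ρ, 4 * c * (D r ^ 2 / f n r) := by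
      rw [intervalIntegral.integral_of_le hδρ.le, ← mul_assoc, ← integral_const_mul]
      exact setIntegral_congr_fun measurableSet_Ioc (fun r _ => by ring)
    have h4 : (∫ r in Ioc δ ρ, 4 * c * (D r ^ 2 / f n r))
        ≤ ∫ r in Ioc (0:ℝ) ρ, 4 * c * (D r ^ 2 / f n r) := by
      apply setIntegral_mono_set hBint
      · exact ae_restrict_of_forall_mem measurableSet_Ioc hBnonneg
      · exact HasSubset.Subset.eventuallyLE (hSsub k)
    calc ∫ r in Ioc δ ρ, ψ r = c * ∫ r in δ..ρ, f n r * φ r ^ 2 / G n r ^ 2 := h1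
      _ ≤ c * (4 * ∫ r in δ..ρ, D r ^ 2 / f n r) := by
          apply mul_le_mul_of_nonneg_left h2 hc
      _ ≤ _ := by rw [h3]; exact h4
  -- monotone convergence
  have key : ∫⁻ r in Ioc (0:ℝ) ρ, ψ' r = ⨆ k, ∫⁻ r in S k, ψ' r := by
    rw [← hSunion]
    calc ∫⁻ r in ⋃ k, S k, ψ' r = ∫⁻ r, (⋃ k, S k).indicator ψ' r := by
          rw [← lintegral_indicator (MeasurableSet.iUnion (fun k => measurableSet_Ioc))]
      _ = ∫⁻ r, ⨆ k, (S k).indicator ψ' r := by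
          congr 1; ext r
          exact Set.indicator_iUnion_apply (M := ℝ≥0∞) rfl _ _ _
      _ = ⨆ k, ∫⁻ r, (S k).indicator ψ' r := by
          apply lintegral_iSup' (fun k => (aemeasurable_indicator_iff measurableSet_Ioc).2 (hψmeas k))
          apply ae_of_all
          intro r k l hkl
          exact Set.indicator_le_indicator_of_subset (hSmono hkl) (fun _ => zero_le) r
      _ = ⨆ k, ∫⁻ r in S k, ψ' r := by
          congr 1; ext k
          rw [lintegral_indicator measurableSet_Ioc]
  rw [key]
  exact iSup_le hSbound

lemma key_lhs (n : ℕ) (hn : 3 ≤ n) {r : ℝ} (hr0 : 0 < r) (hr1 : r < 1) (a : ℝ) :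
    ((n:ℝ) - 2) ^ 2 / 4 * (V n 2 r * a ^ 2 * (2 / (1 - r ^ 2)) ^ n)
      = (2:ℝ) ^ n / 16 * (f n r * a ^ 2 / G n r ^ 2) / r ^ (n - 1) := by
  have h2 : (0:ℝ) < 1 - r ^ 2 := by nlinarith
  have hG := G_pos (n := n) hr0 hr1
  have hn2 : ((n:ℝ) - 2) ≠ 0 := by
    have : (3:ℝ) ≤ (n:ℝ) := by exact_mod_cast hn
    linarith
  have hrpow : G n r ^ (((2:ℝ) + 2) / 2) = G n r ^ (2:ℕ) := by
    rw [show ((2:ℝ) + 2) / 2 = ((2:ℕ):ℝ) by norm_num, Real.rpow_natCast]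
  rw [V, hrpow]
  have hfr : f n r = (1 - r ^ 2) ^ (n - 2) / r ^ (n - 1) := rfl
  have hpow : (1 - r ^ 2) ^ (n - 2) * (1 - r ^ 2) ^ 2 = (1 - r ^ 2) ^ n := by
    rw [← pow_add, Nat.sub_add_cancel (by omega)]
  have hsplit : (1 - r ^ 2) ^ n = (1 - r ^ 2) ^ (n - 2) * (1 - r ^ 2) ^ 2 := hpow.symm
  rw [div_pow, hfr]
  rw [hsplit]
  have h1ne : ((1:ℝ) - r ^ 2) ^ (n-2) ≠ 0 := pow_ne_zero _ h2.ne'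
  have h2ne : ((1:ℝ) - r ^ 2) ^ 2 ≠ 0 := pow_ne_zero _ h2.ne'
  have hrne : r ^ (n-1) ≠ 0 := pow_ne_zero _ hr0.ne'
  field_simp
  ring

set_option maxHeartbeats 1000000 in
/-- Hyperbolic Hardy inequality, Euclidean conformal form: for every
`u ∈ C_c^∞(B₁)`,
`((n-2)²/4) ∫_{B₁} V₂(|x|) u² (2/(1-|x|²))ⁿ dx ≤ ∫_{B₁} (2/(1-|x|²))^{n-2} |∇u|² dx`. -/
theorem stmt_6 (n : ℕ) (hn : 3 ≤ n)
    (u : EuclideanSpace ℝ (Fin n) → ℝ)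
    (hu : ContDiff ℝ (⊤ : ℕ∞) u) (hcs : HasCompactSupport u)
    (hsupp : tsupport u ⊆ Metric.ball 0 1) :
    ((n : ℝ) - 2) ^ 2 / 4 *
        ∫ x in Metric.ball (0 : EuclideanSpace ℝ (Fin n)) 1,
          V n 2 ‖x‖ * u x ^ 2 * (2 / (1 - ‖x‖ ^ 2)) ^ n
      ≤ ∫ x in Metric.ball (0 : EuclideanSpace ℝ (Fin n)) 1,
          (2 / (1 - ‖x‖ ^ 2)) ^ (n - 2) * ‖fderiv ℝ u x‖ ^ 2 := by
  classical
  -- a support radius strictly inside the unit ball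
  obtain ⟨ρ, hρ0, hρ1, hρu⟩ : ∃ ρ : ℝ, 0 < ρ ∧ ρ < 1 ∧
      ∀ x : EuclideanSpace ℝ (Fin n), ρ ≤ ‖x‖ → x ∉ tsupport u := by
    rcases eq_empty_or_nonempty (tsupport u) with h | h
    · exact ⟨1/2, by norm_num, by norm_num, fun x _ hx => by rw [h] at hx; exact hx⟩
    · obtain ⟨x₀, hx₀K, hx₀⟩ := hcs.exists_isMaxOn h continuous_norm.continuousOn
      have hx₀lt : ‖x₀‖ < 1 := by
        have := hsupp hx₀K
        rwa [mem_ball, dist_zero_right] at this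
      refine ⟨(‖x₀‖ + 1) / 2, by positivity, by linarith, ?_⟩
      intro x hx hmem
      have h1 : ‖x‖ ≤ ‖x₀‖ := hx₀ hmem
      have h2 : (0:ℝ) ≤ ‖x₀‖ := norm_nonneg _
      linarith
  have hu0 : ∀ x : EuclideanSpace ℝ (Fin n), ρ ≤ ‖x‖ → u x = 0 := fun x hx =>
    image_eq_zero_of_notMem_tsupport (hρu x hx)
  have hdu0 : ∀ x : EuclideanSpace ℝ (Fin n), ρ ≤ ‖x‖ → fderiv ℝ u x = 0 := by
    intro x hx
    by_contra hne
    exact hρu x hx (support_fderiv_subset (𝕜 := ℝ) hne)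
  haveI : Nonempty (Fin n) := ⟨⟨0, by omega⟩⟩
  haveI hnt : Nontrivial (EuclideanSpace ℝ (Fin n)) := inferInstance
  have huc : Continuous u := hu.continuous
  have hduc : Continuous (fderiv ℝ u) := hu.continuous_fderiv (by simp)
  set c : ℝ := 2 ^ n / 16 with hcdef
  have hc : 0 ≤ c := by positivity
  set F1 : EuclideanSpace ℝ (Fin n) → ℝ :=
    fun x => c * (f n ‖x‖ * u x ^ 2 / G n ‖x‖ ^ 2) / ‖x‖ ^ (n - 1) with hF1def
  set F2 : EuclideanSpace ℝ (Fin n) → ℝ :=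
    fun x => (2 / (1 - ‖x‖ ^ 2)) ^ (n - 2) * ‖fderiv ℝ u x‖ ^ 2 with hF2def
  have hF2nn : ∀ x, 0 ≤ F2 x := by
    intro x
    rcases lt_or_ge ‖x‖ 1 with h1 | h1
    · have h2 : (0:ℝ) < 1 - ‖x‖ ^ 2 := by nlinarith [norm_nonneg x]
      have : (0:ℝ) ≤ 2 / (1 - ‖x‖ ^ 2) := by positivity
      exact mul_nonneg (pow_nonneg this _) (sq_nonneg _)
    · rw [hF2def]
      simp only [hdu0 x (le_trans hρ1.le h1)]
      simp
  have hF2cont : Continuous F2 := by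
    rw [continuous_iff_continuousAt]
    intro x
    rcases lt_or_ge ‖x‖ 1 with h1 | h1
    · have h2 : (1:ℝ) - ‖x‖ ^ 2 ≠ 0 := by nlinarith [norm_nonneg x]
      have hden : ContinuousAt (fun y : EuclideanSpace ℝ (Fin n) => 1 - ‖y‖ ^ 2) x :=
        (continuous_const.sub (continuous_norm.pow 2)).continuousAt
      exact ((continuousAt_const.div hden h2).pow _).mul ((hduc.norm.pow 2).continuousAt)
    · have hopen : IsOpen {y : EuclideanSpace ℝ (Fin n) | ρ < ‖y‖} :=
        isOpen_lt continuous_const continuous_norm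
      have hmem : x ∈ {y : EuclideanSpace ℝ (Fin n) | ρ < ‖y‖} := lt_of_lt_of_le hρ1 h1
      have hev : F2 =ᶠ[nhds x] (fun _ => (0:ℝ)) := by
        filter_upwards [hopen.mem_nhds hmem] with y hy
        rw [hF2def]
        simp only [hdu0 y (le_of_lt hy)]
        simp
      exact ContinuousAt.congr continuousAt_const hev.symm
  have hF2supp : HasCompactSupport F2 := by
    apply hcs.mono'
    intro x hx
    apply support_fderiv_subset (𝕜 := ℝ)
    intro hzero
    apply hx
    rw [hF2def]
    simp only [hzero]
    simp
  have hF2int : Integrable F2 := hF2cont.integrable_of_hasCompactSupport hF2supp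
  -- LHS transformation to a full-space integral of F1
  have hLHS : ((n:ℝ) - 2) ^ 2 / 4 *
      ∫ x in Metric.ball (0 : EuclideanSpace ℝ (Fin n)) 1,
        V n 2 ‖x‖ * u x ^ 2 * (2 / (1 - ‖x‖ ^ 2)) ^ n = ∫ x, F1 x := by
    have hzero : ∀ x ∉ Metric.ball (0 : EuclideanSpace ℝ (Fin n)) 1,
        V n 2 ‖x‖ * u x ^ 2 * (2 / (1 - ‖x‖ ^ 2)) ^ n = 0 := by
      intro x hx
      have h1 : (1:ℝ) ≤ ‖x‖ := by
        rw [mem_ball, dist_zero_right] at hx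
        linarith [not_lt.1 hx]
      rw [hu0 x (le_trans hρ1.le h1)]
      ring
    rw [setIntegral_eq_integral_of_forall_compl_eq_zero hzero, ← integral_const_mul]
    apply integral_congr_ae (ae_of_all _ ?_)
    intro x
    show ((n:ℝ) - 2) ^ 2 / 4 * (V n 2 ‖x‖ * u x ^ 2 * (2 / (1 - ‖x‖ ^ 2)) ^ n)
      = c * (f n ‖x‖ * u x ^ 2 / G n ‖x‖ ^ 2) / ‖x‖ ^ (n - 1)
    rcases eq_or_lt_of_le (norm_nonneg x) with h0 | h0
    · have hx0 : ‖x‖ = 0 := h0.symm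
      have hf0 : f n (0:ℝ) = 0 := by
        rw [f]
        rw [zero_pow (by omega : n - 1 ≠ 0)]
        simp
      rw [hx0, V, hf0]
      simp
    rcases lt_or_ge ‖x‖ 1 with h1 | h1
    · rw [hcdef]
      exact key_lhs n hn h0 h1 (u x)
    · rw [hu0 x (le_trans hρ1.le h1)]
      ring
  -- RHS is a full-space integral of F2
  have hRHS : (∫ x in Metric.ball (0 : EuclideanSpace ℝ (Fin n)) 1,
      (2 / (1 - ‖x‖ ^ 2)) ^ (n - 2) * ‖fderiv ℝ u x‖ ^ 2) = ∫ x, F2 x := by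
    apply setIntegral_eq_integral_of_forall_compl_eq_zero
    intro x hx
    have h1 : (1:ℝ) ≤ ‖x‖ := by
      rw [mem_ball, dist_zero_right] at hx
      linarith [not_lt.1 hx]
    simp only [hdu0 x (le_trans hρ1.le h1)]
    simp
  -- F1 is nonnegative
  have hF1nn : ∀ x, 0 ≤ F1 x := by
    intro x
    rcases lt_or_ge ‖x‖ 1 with h1 | h1
    · have hf : 0 ≤ f n ‖x‖ := by
        apply div_nonneg (pow_nonneg (by nlinarith [norm_nonneg x]) _)
          (pow_nonneg (norm_nonneg x) _)
      exact div_nonneg (mul_nonneg hc (div_nonneg (mul_nonneg hf (sq_nonneg _))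
        (sq_nonneg _))) (pow_nonneg (norm_nonneg x) _)
    · rw [hF1def]
      simp only [hu0 x (le_trans hρ1.le h1)]
      simp
  -- F1 is a.e. strongly measurable
  have hF1sm : AEStronglyMeasurable F1 volume := by
    have hcont : ContinuousOn F1 ({(0 : EuclideanSpace ℝ (Fin n))}ᶜ) := by
      intro x hx
      have hx0 : ‖x‖ ≠ 0 := by
        simp only [mem_compl_iff, mem_singleton_iff] at hx
        simpa [norm_eq_zero] using hx
      have h0 : 0 < ‖x‖ := lt_of_le_of_ne (norm_nonneg x) (Ne.symm hx0)
      rcases lt_or_ge ‖x‖ 1 with h1 | h1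
      · have hG := (G_pos (n := n) h0 h1).ne'
        apply ContinuousAt.continuousWithinAt
        apply ContinuousAt.div
        · apply continuousAt_const.mul
          apply ContinuousAt.div
          · exact ((f_contAt hx0).comp continuous_norm.continuousAt).mul
              ((huc.pow 2).continuousAt)
          · exact (((hasDerivAt_G h0).continuousAt.comp continuous_norm.continuousAt).pow 2)
          · exact pow_ne_zero _ hG
        · exact (continuous_norm.pow _).continuousAt
        · exact pow_ne_zero _ hx0
      · apply ContinuousAt.continuousWithinAt
        have hopen : IsOpen {y : EuclideanSpace ℝ (Fin n) | ρ < ‖y‖} :=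
          isOpen_lt continuous_const continuous_norm
        have hmem : x ∈ {y : EuclideanSpace ℝ (Fin n) | ρ < ‖y‖} := lt_of_lt_of_le hρ1 h1
        have hev : F1 =ᶠ[nhds x] (fun _ => (0:ℝ)) := by
          filter_upwards [hopen.mem_nhds hmem] with y hy
          rw [hF1def]
          simp only [hu0 y (le_of_lt hy)]
          simp
        exact ContinuousAt.congr continuousAt_const hev.symm
    have h1 := hcont.aemeasurable (μ := volume) (measurableSet_singleton 0).compl
    rw [restrict_compl_singleton] at h1
    exact h1.aestronglyMeasurable
  have hL2 : ∫ x, F1 x = (∫⁻ x, ENNReal.ofReal (F1 x)).toReal :=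
    integral_eq_lintegral_of_nonneg_ae (ae_of_all _ hF1nn) hF1sm
  have hdim : Module.finrank ℝ (EuclideanSpace ℝ (Fin n)) = n := finrank_euclideanSpace_fin
  -- abbreviations for the polar decomposition
  set ν : Measure (sphere (0 : EuclideanSpace ℝ (Fin n)) 1) :=
    (volume : Measure (EuclideanSpace ℝ (Fin n))).toSphere with hνdef
  set Hf : sphere (0 : EuclideanSpace ℝ (Fin n)) 1 × Ioi (0:ℝ) → ℝ≥0∞ :=
    fun p => ENNReal.ofReal (c * (f n p.2 * u ((p.2 : ℝ) • (p.1 : EuclideanSpace ℝ (Fin n))) ^ 2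
      / G n p.2 ^ 2) / (p.2 : ℝ) ^ (n - 1)) with hHfdef
  set gI : sphere (0 : EuclideanSpace ℝ (Fin n)) 1 → ℝ :=
    fun ω => ∫ r in Ioi (0:ℝ), r ^ (n-1) * F2 (r • (ω : EuclideanSpace ℝ (Fin n))) with hgIdef
  have hMnn : ∀ (ω : sphere (0 : EuclideanSpace ℝ (Fin n)) 1) (r : ℝ), r ∈ Ioi (0:ℝ) →
      0 ≤ r ^ (n-1) * F2 (r • (ω : EuclideanSpace ℝ (Fin n))) := by
    intro ω r hr
    exact mul_nonneg (pow_nonneg (le_of_lt hr) _) (hF2nn _)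
  have hgInn : ∀ ω, 0 ≤ gI ω := fun ω =>
    setIntegral_nonneg measurableSet_Ioi (hMnn ω)
  have hmp := (volume : Measure (EuclideanSpace ℝ (Fin n))).measurePreserving_homeomorphUnitSphereProd
  rw [hdim] at hmp
  -- polar decomposition of the F1 lintegral
  have hpolar1 : ∫⁻ x, ENNReal.ofReal (F1 x) =
      ∫⁻ p, Hf p ∂(ν.prod (Measure.volumeIoiPow (n - 1))) := by
    have step1 : ∫⁻ x, ENNReal.ofReal (F1 x) =
        ∫⁻ x : ({(0 : EuclideanSpace ℝ (Fin n))}ᶜ : Set (EuclideanSpace ℝ (Fin n))),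
          ENNReal.ofReal (F1 x) ∂(volume.comap Subtype.val) := by
      have h0 := lintegral_subtype_comap (μ := (volume : Measure (EuclideanSpace ℝ (Fin n))))
        (measurableSet_singleton 0).compl (fun x => ENNReal.ofReal (F1 x))
      rw [restrict_compl_singleton] at h0
      exact h0.symm
    rw [step1, ← hmp.lintegral_comp_emb (Homeomorph.measurableEmbedding _) Hf]
    apply lintegral_congr
    intro x
    have hx : (x : EuclideanSpace ℝ (Fin n)) ≠ 0 := x.2
    rw [hHfdef, hF1def]
    simp only [homeomorphUnitSphereProd_apply_fst_coe, homeomorphUnitSphereProd_apply_snd_coe,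
      smul_inv_smul₀ (norm_ne_zero_iff.2 hx)]
  have hHfmeas : Measurable Hf := by
    have hval2 : Continuous (fun p : sphere (0 : EuclideanSpace ℝ (Fin n)) 1 × Ioi (0:ℝ) =>
        (p.2 : ℝ)) := continuous_subtype_val.comp continuous_snd
    have hcf : Continuous (fun p : sphere (0 : EuclideanSpace ℝ (Fin n)) 1 × Ioi (0:ℝ) =>
        f n (p.2 : ℝ)) := by
      rw [continuous_iff_continuousAt]
      intro p
      exact ContinuousAt.comp (x := p) (g := f n)
        (f := fun p : sphere (0 : EuclideanSpace ℝ (Fin n)) 1 × Ioi (0:ℝ) => ((p.2 : ℝ)))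
        (f_contAt (p.2.2 : (0:ℝ) < p.2).ne') hval2.continuousAt
    have hcG : Continuous (fun p : sphere (0 : EuclideanSpace ℝ (Fin n)) 1 × Ioi (0:ℝ) =>
        G n (p.2 : ℝ)) := by
      rw [continuous_iff_continuousAt]
      intro p
      exact ContinuousAt.comp (x := p) (g := G n)
        (f := fun p : sphere (0 : EuclideanSpace ℝ (Fin n)) 1 × Ioi (0:ℝ) => ((p.2 : ℝ)))
        (hasDerivAt_G (p.2.2 : (0:ℝ) < p.2)).continuousAt hval2.continuousAt
    have hcu : Continuous (fun p : sphere (0 : EuclideanSpace ℝ (Fin n)) 1 × Ioi (0:ℝ) =>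
        u ((p.2 : ℝ) • (p.1 : EuclideanSpace ℝ (Fin n)))) :=
      huc.comp (hval2.smul (continuous_subtype_val.comp continuous_fst))
    apply ENNReal.measurable_ofReal.comp
    exact ((measurable_const.mul ((hcf.measurable.mul ((hcu.pow 2).measurable)).div
      ((hcG.pow 2).measurable))).div ((hval2.pow (n-1)).measurable))
  have hpolar2 : ∫⁻ p, Hf p ∂(ν.prod (Measure.volumeIoiPow (n - 1)))
      = ∫⁻ ω, ∫⁻ r, Hf (ω, r) ∂(Measure.volumeIoiPow (n - 1)) ∂ν :=
    lintegral_prod _ hHfmeas.aemeasurable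
  -- inner 1D Hardy bound
  have hinner : ∀ ω, (∫⁻ r, Hf (ω, r) ∂(Measure.volumeIoiPow (n - 1)))
      ≤ ENNReal.ofReal (gI ω) := by
    intro ω
    have hω : ‖(ω : EuclideanSpace ℝ (Fin n))‖ = 1 := mem_sphere_zero_iff_norm.1 ω.2
    set φ : ℝ → ℝ := fun r => u (r • (ω : EuclideanSpace ℝ (Fin n))) with hφdef
    set D : ℝ → ℝ := fun r => fderiv ℝ u (r • (ω : EuclideanSpace ℝ (Fin n)))
      (ω : EuclideanSpace ℝ (Fin n)) with hDdef
    have hDer : ∀ r : ℝ, HasDerivAt φ (D r) r := by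
      intro r
      have h1 : HasDerivAt (fun s : ℝ => s • (ω : EuclideanSpace ℝ (Fin n)))
          ((1:ℝ) • (ω : EuclideanSpace ℝ (Fin n))) r :=
        (hasDerivAt_id r).smul_const _
      rw [one_smul] at h1
      have h2 : HasFDerivAt u (fderiv ℝ u (r • (ω : EuclideanSpace ℝ (Fin n))))
          (r • (ω : EuclideanSpace ℝ (Fin n))) :=
        (hu.differentiable (by simp) (r • (ω : EuclideanSpace ℝ (Fin n)))).hasFDerivAt
      exact h2.comp_hasDerivAt r h1
    have hDc : Continuous D := by
      have h2 : Continuous fun r : ℝ => fderiv ℝ u (r • (ω : EuclideanSpace ℝ (Fin n))) :=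
        hduc.comp (continuous_id.smul continuous_const)
      exact h2.clm_apply continuous_const
    have hnorm : ∀ r : ℝ, 0 < r → ‖r • (ω : EuclideanSpace ℝ (Fin n))‖ = r := by
      intro r hr
      rw [norm_smul, hω, mul_one, Real.norm_eq_abs, abs_of_pos hr]
    have hφ0 : ∀ r, ρ ≤ r → φ r = 0 := by
      intro r hr
      apply hu0
      rw [hnorm r (lt_of_lt_of_le hρ0 hr)]
      exact hr
    -- rewrite the `volumeIoiPow` lintegral as a set lintegral over `Ioi 0`
    have hgmeas : Measurable (fun r : Ioi (0:ℝ) => Hf (ω, r)) :=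
      hHfmeas.comp (measurable_const.prodMk measurable_id)
    have hstep : (∫⁻ r, Hf (ω, r) ∂(Measure.volumeIoiPow (n - 1)))
        = ∫⁻ r in Ioi (0:ℝ), ENNReal.ofReal (c * (f n r * φ r ^ 2 / G n r ^ 2)) := by
      rw [Measure.volumeIoiPow, lintegral_withDensity_eq_lintegral_mul _
        (measurable_subtype_coe.pow_const _).ennreal_ofReal hgmeas]
      have hcongr : ∀ r : Ioi (0:ℝ),
          ((fun r : Ioi (0:ℝ) => ENNReal.ofReal ((r:ℝ) ^ (n-1))) * fun r : Ioi (0:ℝ) => Hf (ω, r)) r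
          = (fun t : ℝ => ENNReal.ofReal (c * (f n t * φ t ^ 2 / G n t ^ 2))) (r : ℝ) := by
        intro r
        have hr0 : (0:ℝ) < r := r.2
        have hrne : (r:ℝ) ^ (n-1) ≠ 0 := pow_ne_zero _ hr0.ne'
        have key : ENNReal.ofReal ((r:ℝ) ^ (n-1)) * ENNReal.ofReal
            (c * (f n (r:ℝ) * u ((r:ℝ) • (ω : EuclideanSpace ℝ (Fin n))) ^ 2 / G n (r:ℝ) ^ 2)
              / (r:ℝ) ^ (n-1))
            = ENNReal.ofReal (c * (f n (r:ℝ)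
              * u ((r:ℝ) • (ω : EuclideanSpace ℝ (Fin n))) ^ 2 / G n (r:ℝ) ^ 2)) := by
          rw [← ENNReal.ofReal_mul (pow_nonneg hr0.le _), mul_div_cancel₀ _ hrne]
        exact key
      rw [lintegral_congr hcongr]
      exact lintegral_subtype_comap (μ := (volume : Measure ℝ)) measurableSet_Ioi
        (fun t => ENNReal.ofReal (c * (f n t * φ t ^ 2 / G n t ^ 2)))
    rw [hstep]
    refine le_trans (hardy1d_lintegral n hρ0 hρ1 hc φ D hDer hDc hφ0) (ENNReal.ofReal_le_ofReal ?_)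
    -- compare the real 1D integrals
    have hint1 : IntegrableOn (fun r => 4 * c * (D r ^ 2 / f n r)) (Ioc (0:ℝ) ρ) volume :=
      Dsq_integrableOn n hρ0 hρ1 (4*c) D hDc
    have hMcont : Continuous (fun r : ℝ => r ^ (n-1) * F2 (r • (ω : EuclideanSpace ℝ (Fin n)))) :=
      (continuous_pow _).mul (hF2cont.comp (continuous_id.smul continuous_const))
    have hM0 : ∀ r : ℝ, ρ ≤ r → F2 (r • (ω : EuclideanSpace ℝ (Fin n))) = 0 := by
      intro r hr
      have : ρ ≤ ‖r • (ω : EuclideanSpace ℝ (Fin n))‖ := by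
        rw [hnorm r (lt_of_lt_of_le hρ0 hr)]; exact hr
      rw [hF2def]
      simp only [hdu0 _ this]
      simp
    have hMint : IntegrableOn (fun r : ℝ => r ^ (n-1) * F2 (r • (ω : EuclideanSpace ℝ (Fin n))))
        (Ioi (0:ℝ)) volume := by
      rw [← Ioc_union_Ioi_eq_Ioi hρ0.le]
      apply IntegrableOn.union
      · exact (hMcont.continuousOn.integrableOn_compact isCompact_Icc).mono_set
          Ioc_subset_Icc_self
      · apply (integrableOn_zero (s := Ioi ρ)).congr_fun _ measurableSet_Ioi
        intro r hr
        show (0:ℝ) = r ^ (n-1) * F2 (r • (ω : EuclideanSpace ℝ (Fin n)))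
        rw [hM0 r (le_of_lt hr), mul_zero]
    have hDle : ∀ r ∈ Ioc (0:ℝ) ρ, 4 * c * (D r ^ 2 / f n r)
        ≤ r ^ (n-1) * F2 (r • (ω : EuclideanSpace ℝ (Fin n))) := by
      intro r hr
      have h0 : 0 < r := hr.1
      have h1 : r < 1 := lt_of_le_of_lt hr.2 hρ1
      have h2 : (0:ℝ) < 1 - r ^ 2 := by nlinarith
      have hD2 : D r ^ 2 ≤ ‖fderiv ℝ u (r • (ω : EuclideanSpace ℝ (Fin n)))‖ ^ 2 := by
        have hop := (fderiv ℝ u (r • (ω : EuclideanSpace ℝ (Fin n)))).le_opNorm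
          (ω : EuclideanSpace ℝ (Fin n))
        rw [hω, mul_one] at hop
        calc D r ^ 2 = |D r| ^ 2 := (sq_abs _).symm
          _ ≤ ‖fderiv ℝ u (r • (ω : EuclideanSpace ℝ (Fin n)))‖ ^ 2 := by
              apply pow_le_pow_left₀ (abs_nonneg _)
              simpa [Real.norm_eq_abs] using hop
      have h4c : 4 * c = (2:ℝ) ^ (n-2) := by
        have hsplit : (2:ℝ) ^ n = 2 ^ (n-2) * 4 := by
          calc (2:ℝ) ^ n = 2 ^ ((n-2)+2) := by congr 1; omega
            _ = 2 ^ (n-2) * 2 ^ 2 := pow_add _ _ _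
            _ = 2 ^ (n-2) * 4 := by norm_num
        rw [hcdef, hsplit]; ring
      have hfr : f n r = (1 - r ^ 2) ^ (n-2) / r ^ (n-1) := rfl
      have hw : (2 / (1 - r ^ 2)) ^ (n-2) = 2 ^ (n-2) / (1 - r ^ 2) ^ (n-2) := div_pow _ _ _
      rw [hF2def]
      simp only [hnorm r h0]
      calc 4 * c * (D r ^ 2 / f n r)
          = (2 ^ (n-2) * r ^ (n-1) / (1 - r ^ 2) ^ (n-2)) * D r ^ 2 := by
            rw [h4c, hfr]
            field_simp
        _ ≤ (2 ^ (n-2) * r ^ (n-1) / (1 - r ^ 2) ^ (n-2))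
              * ‖fderiv ℝ u (r • (ω : EuclideanSpace ℝ (Fin n)))‖ ^ 2 := by
            apply mul_le_mul_of_nonneg_left hD2 (by positivity)
        _ = r ^ (n-1) * ((2 / (1 - r ^ 2)) ^ (n-2)
              * ‖fderiv ℝ u (r • (ω : EuclideanSpace ℝ (Fin n)))‖ ^ 2) := by
            rw [hw]; ring
    calc ∫ r in Ioc (0:ℝ) ρ, 4 * c * (D r ^ 2 / f n r)
        ≤ ∫ r in Ioc (0:ℝ) ρ, r ^ (n-1) * F2 (r • (ω : EuclideanSpace ℝ (Fin n))) := by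
          apply setIntegral_mono_on hint1 (hMint.mono_set Ioc_subset_Ioi_self)
            measurableSet_Ioc hDle
      _ ≤ ∫ r in Ioi (0:ℝ), r ^ (n-1) * F2 (r • (ω : EuclideanSpace ℝ (Fin n))) := by
          apply setIntegral_mono_set hMint
            (ae_restrict_of_forall_mem measurableSet_Ioi (hMnn ω))
            (HasSubset.Subset.eventuallyLE Ioc_subset_Ioi_self)
  -- Fubini for F2
  have hpolarF2 : (∫ x, F2 x) = ∫ ω, gI ω ∂ν ∧ Integrable gI ν := by
    set H2 : sphere (0 : EuclideanSpace ℝ (Fin n)) 1 × Ioi (0:ℝ) → ℝ :=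
      fun p => F2 ((p.2 : ℝ) • (p.1 : EuclideanSpace ℝ (Fin n))) with hH2def
    have hcomp : ∀ x : ({(0 : EuclideanSpace ℝ (Fin n))}ᶜ : Set (EuclideanSpace ℝ (Fin n))),
        H2 (homeomorphUnitSphereProd (EuclideanSpace ℝ (Fin n)) x) = F2 x := by
      intro x
      have hx : (x : EuclideanSpace ℝ (Fin n)) ≠ 0 := x.2
      rw [hH2def]
      simp only [homeomorphUnitSphereProd_apply_fst_coe, homeomorphUnitSphereProd_apply_snd_coe,
        smul_inv_smul₀ (norm_ne_zero_iff.2 hx)]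
    have hsub : Integrable (fun x : ({(0 : EuclideanSpace ℝ (Fin n))}ᶜ :
        Set (EuclideanSpace ℝ (Fin n))) => F2 x) (volume.comap Subtype.val) := by
      have hmap : Integrable F2
          ((volume.comap (Subtype.val : ({(0 : EuclideanSpace ℝ (Fin n))}ᶜ :
            Set (EuclideanSpace ℝ (Fin n))) → EuclideanSpace ℝ (Fin n))).map Subtype.val) := by
        rw [map_comap_subtype_coe (measurableSet_singleton 0).compl]
        exact hF2int.restrict
      exact (MeasurableEmbedding.subtype_coe (measurableSet_singleton 0).compl).integrable_map_iff.1 hmap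
    have hH2int : Integrable H2 (ν.prod (Measure.volumeIoiPow (n - 1))) := by
      rw [← hmp.integrable_comp_emb (Homeomorph.measurableEmbedding _)]
      exact hsub.congr (ae_of_all _ (fun x => (hcomp x).symm))
    have h4 : ∀ ω, (∫ r, H2 (ω, r) ∂(Measure.volumeIoiPow (n - 1))) = gI ω := by
      intro ω
      simp only [Measure.volumeIoiPow, ENNReal.ofReal]
      rw [integral_withDensity_eq_integral_smul
        ((measurable_subtype_coe.pow_const _).real_toNNReal)]
      refine Eq.trans (integral_subtype_comap measurableSet_Ioi
        (fun t : ℝ => (t ^ (n-1)).toNNReal • F2 (t • (ω : EuclideanSpace ℝ (Fin n))))) ?_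
      apply setIntegral_congr_fun measurableSet_Ioi
      intro r hr
      show (r ^ (n-1)).toNNReal • F2 (r • (ω : EuclideanSpace ℝ (Fin n)))
        = r ^ (n-1) * F2 (r • (ω : EuclideanSpace ℝ (Fin n)))
      rw [NNReal.smul_def, Real.coe_toNNReal _ (pow_nonneg hr.out.le _), smul_eq_mul]
    constructor
    · calc ∫ x, F2 x
          = ∫ x : ({(0 : EuclideanSpace ℝ (Fin n))}ᶜ : Set (EuclideanSpace ℝ (Fin n))),
            F2 x ∂(volume.comap Subtype.val) := by
            have h0 := integral_subtype_comap (μ := (volume : Measure (EuclideanSpace ℝ (Fin n))))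
              (measurableSet_singleton 0).compl F2
            rw [restrict_compl_singleton] at h0
            exact h0.symm
        _ = ∫ x : ({(0 : EuclideanSpace ℝ (Fin n))}ᶜ : Set (EuclideanSpace ℝ (Fin n))),
            H2 (homeomorphUnitSphereProd (EuclideanSpace ℝ (Fin n)) x)
              ∂(volume.comap Subtype.val) :=
            integral_congr_ae (ae_of_all _ (fun x => (hcomp x).symm))
        _ = ∫ p, H2 p ∂(ν.prod (Measure.volumeIoiPow (n - 1))) :=
            hmp.integral_comp (Homeomorph.measurableEmbedding _) H2
        _ = ∫ ω, (∫ r, H2 (ω, r) ∂(Measure.volumeIoiPow (n - 1))) ∂ν :=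
            integral_prod _ hH2int
        _ = ∫ ω, gI ω ∂ν := integral_congr_ae (ae_of_all _ h4)
    · exact (hH2int.integral_prod_left).congr (ae_of_all _ h4)
  -- assemble
  have hlast : ∫⁻ ω, ENNReal.ofReal (gI ω) ∂ν = ENNReal.ofReal (∫ ω, gI ω ∂ν) :=
    (ofReal_integral_eq_lintegral_ofReal hpolarF2.2 (ae_of_all _ hgInn)).symm
  have hchain : ∫⁻ x, ENNReal.ofReal (F1 x) ≤ ENNReal.ofReal (∫ x, F2 x) := by
    rw [hpolar1, hpolar2, hpolarF2.1]
    calc ∫⁻ ω, ∫⁻ r, Hf (ω, r) ∂(Measure.volumeIoiPow (n - 1)) ∂ν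
        ≤ ∫⁻ ω, ENNReal.ofReal (gI ω) ∂ν := lintegral_mono hinner
      _ = ENNReal.ofReal (∫ ω, gI ω ∂ν) := hlast
  rw [hLHS, hRHS, hL2]
  apply ENNReal.toReal_le_of_le_ofReal (integral_nonneg hF2nn) hchain
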